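/- The crown graph H₄ = K_{4,4} minus a perfect matching satisfies fp(H₄) = 2, and moreover the chromatic number of its host-induced 2K₂ conflict graph equals 2, so the conflict-graph lower bound is tight for H₄. -/

import Mathlib

open SimpleGraph

/-- A graph contains an induced `2K₂`: four vertices carrying exactly two disjoint edges. -/
def Has2K2 {V : Type*} (G : SimpleGraph V) : Prop :=
  ∃ a b c d : V, G.Adj a b ∧ G.Adj c d ∧
    a ≠ c ∧ a ≠ d ∧ b ≠ c ∧ b ≠ d ∧
    ¬ G.Adj a c ∧ ¬ G.Adj a d ∧ ¬ G.Adj b c ∧ ¬ G.Adj b d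

/-- `f` assigns each edge of `G` one of `k` parts, and each part induces
an induced-`2K₂`-free (Ferrers) graph. -/
def IsFerrersPartition {V : Type*} (G : SimpleGraph V) (k : ℕ)
    (f : G.edgeSet → Fin k) : Prop :=
  ∀ i : Fin k,
    ¬ Has2K2 (SimpleGraph.fromEdgeSet {e | ∃ h : e ∈ G.edgeSet, f ⟨e, h⟩ = i})

/-- The Ferrers partition number. -/
noncomputable def fp {V : Type*} (G : SimpleGraph V) : ℕ :=
  sInf {k | ∃ f : G.edgeSet → Fin k, IsFerrersPartition G k f}

/-- `M` is an induced matching of `G`. -/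
def IsInducedMatching {V : Type*} (G : SimpleGraph V) (M : Set (Sym2 V)) : Prop :=
  M ⊆ G.edgeSet ∧
  ∀ e ∈ M, ∀ f ∈ M, e ≠ f → ∀ u ∈ e, ∀ v ∈ f, u ≠ v ∧ ¬ G.Adj u v

/-- The induced matching number. -/
noncomputable def nuInd {V : Type*} (G : SimpleGraph V) : ℕ :=
  sSup {n | ∃ M : Finset (Sym2 V), IsInducedMatching G ↑M ∧ M.card = n}

/-- The crown graph `H_n`: `K_{n,n}` minus a perfect matching, with
`u_i ~ v_j` iff `i ≠ j`. -/
def crown (n : ℕ) : SimpleGraph (Fin n ⊕ Fin n) :=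
  SimpleGraph.fromRel (fun x y =>
    ∃ i j : Fin n, i ≠ j ∧ x = Sum.inl i ∧ y = Sum.inr j)

/-- The host-induced `2K₂` conflict graph on the edge set of a bipartite graph `G`:
two edges are adjacent iff they are vertex-disjoint and both cross pairs are
non-edges of the host. -/
def Chost {α β : Type*} (G : SimpleGraph (α ⊕ β)) : SimpleGraph G.edgeSet :=
  SimpleGraph.fromRel (fun e f =>
    ∃ u v u' v', (e : Sym2 (α ⊕ β)) = s(Sum.inl u, Sum.inr v) ∧
      (f : Sym2 (α ⊕ β)) = s(Sum.inl u', Sum.inr v') ∧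
      u ≠ u' ∧ v ≠ v' ∧
      ¬ G.Adj (Sum.inl u) (Sum.inr v') ∧ ¬ G.Adj (Sum.inl u') (Sum.inr v))


/-! Split the edges `u_i v_j` (`i ≠ j`) of the crown into those with `i < j` and those with
`j < i`. In each half the neighbourhoods of the `u_i` are nested, so neither half contains an
induced `2K₂`; this gives `fp ≤ 2`. Two edges of the crown conflict in the host only when the
cross pairs are the missing matching edges, i.e. when they are `u_i v_j` and `u_j v_i`, which
lie in different halves; so the same split is a proper 2-colouring of the conflict graph. The
lower bounds come from the induced `2K₂` formed by `u_0 v_1` and `u_1 v_0`, a conflicting pair. -/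

variable {V α β : Type*}

lemma two_le_of_isFerrersPartition {G : SimpleGraph V} (h : Has2K2 G) {k : ℕ}
    {f : G.edgeSet → Fin k} (hf : IsFerrersPartition G k f) : 2 ≤ k := by
  have ⟨a, b, _, _, hab, _⟩ := h
  by_contra! hk
  interval_cases k
  · exact (f ⟨s(a, b), hab⟩).elim0
  · refine hf 0 ?_
    have hall : {e | ∃ h : e ∈ G.edgeSet, f ⟨e, h⟩ = 0} = G.edgeSet :=
      Set.ext fun e => ⟨fun ⟨he, _⟩ => he, fun he => ⟨he, Subsingleton.elim _ _⟩⟩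
    rwa [hall, fromEdgeSet_edgeSet]

lemma fp_eq_two {G : SimpleGraph V} (h : Has2K2 G) {f : G.edgeSet → Fin 2}
    (hf : IsFerrersPartition G 2 f) : fp G = 2 :=
  le_antisymm (Nat.sInf_le ⟨f, hf⟩)
    (le_csInf ⟨2, f, hf⟩ fun _ ⟨_, hg⟩ => two_le_of_isFerrersPartition h hg)

section EdgeSplit

variable {G H : SimpleGraph V}

open Classical in
noncomputable def edgeSplit (G H : SimpleGraph V) (e : H.edgeSet) : Fin 2 :=
  if e.1 ∈ G.edgeSet then 0 else 1

lemma edgeSplit_eq_zero_iff {e : H.edgeSet} : edgeSplit G H e = 0 ↔ e.1 ∈ G.edgeSet := by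
  unfold edgeSplit; split_ifs <;> simp [*]

lemma edgeSplit_eq_one_iff {e : H.edgeSet} : edgeSplit G H e = 1 ↔ e.1 ∉ G.edgeSet := by
  unfold edgeSplit; split_ifs <;> simp [*]

lemma fromEdgeSet_edgeSplit_eq_zero (hGH : G ≤ H) :
    fromEdgeSet {e | ∃ h : e ∈ H.edgeSet, edgeSplit G H ⟨e, h⟩ = 0} = G := by
  convert fromEdgeSet_edgeSet G using 2
  ext e
  simp only [Set.mem_ofPred_eq, edgeSplit_eq_zero_iff]
  exact ⟨fun ⟨_, he⟩ => he, fun he => ⟨edgeSet_mono hGH he, he⟩⟩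

lemma fromEdgeSet_edgeSplit_eq_one :
    fromEdgeSet {e | ∃ h : e ∈ H.edgeSet, edgeSplit G H ⟨e, h⟩ = 1} = H \ G := by
  convert fromEdgeSet_edgeSet (H \ G) using 2
  ext e
  simp only [Set.mem_ofPred_eq, edgeSplit_eq_one_iff, edgeSet_sdiff, Set.mem_sdiff]
  exact ⟨fun ⟨he, hG⟩ => ⟨he, hG⟩, fun ⟨he, hG⟩ => ⟨he, hG⟩⟩

lemma isFerrersPartition_edgeSplit (hGH : G ≤ H) (hG : ¬ Has2K2 G) (hHG : ¬ Has2K2 (H \ G)) :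
    IsFerrersPartition H 2 (edgeSplit G H) :=
  Fin.forall_fin_two.mpr
    ⟨by rwa [fromEdgeSet_edgeSplit_eq_zero hGH], by rwa [fromEdgeSet_edgeSplit_eq_one]⟩

end EdgeSplit

section BipartiteOfRel

def bipartiteOfRel (R : α → β → Prop) : SimpleGraph (α ⊕ β) :=
  fromRel fun x y => ∃ a b, R a b ∧ x = Sum.inl a ∧ y = Sum.inr b

variable {R S : α → β → Prop} {a a' : α} {b b' : β}

@[simp] lemma bipartiteOfRel_adj_inl_inr :
    (bipartiteOfRel R).Adj (Sum.inl a) (Sum.inr b) ↔ R a b := by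
  simp [bipartiteOfRel]

@[simp] lemma bipartiteOfRel_adj_inr_inl :
    (bipartiteOfRel R).Adj (Sum.inr b) (Sum.inl a) ↔ R a b := by
  simp [bipartiteOfRel]

@[simp] lemma not_bipartiteOfRel_adj_inl_inl :
    ¬ (bipartiteOfRel R).Adj (Sum.inl a) (Sum.inl a') := by
  simp [bipartiteOfRel]

@[simp] lemma not_bipartiteOfRel_adj_inr_inr :
    ¬ (bipartiteOfRel R).Adj (Sum.inr b) (Sum.inr b') := by
  simp [bipartiteOfRel]

lemma mk_mem_edgeSet_bipartiteOfRel :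
    s(Sum.inl a, Sum.inr b) ∈ (bipartiteOfRel R).edgeSet ↔ R a b :=
  bipartiteOfRel_adj_inl_inr

lemma bipartiteOfRel_mono (h : ∀ a b, R a b → S a b) :
    bipartiteOfRel R ≤ bipartiteOfRel S := by
  rintro (x | x) (y | y) hxy <;> simp_all

/-- `hR` is the Ferrers condition: the neighbourhoods `{b | R a b}` are nested. -/
lemma not_has2K2_bipartiteOfRel (hR : ∀ a b a' b', R a b → R a' b' → R a b' ∨ R a' b) :
    ¬ Has2K2 (bipartiteOfRel R) := by
  rintro ⟨x, y, z, w, hxy, hzw, -, -, -, -, hxz, hxw, hyz, hyw⟩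
  rcases x with x | x <;> rcases y with y | y <;> rcases z with z | z <;> rcases w with w | w <;>
    simp only [bipartiteOfRel_adj_inl_inr, bipartiteOfRel_adj_inr_inl,
      not_bipartiteOfRel_adj_inl_inl, not_bipartiteOfRel_adj_inr_inr] at * <;>
    grind

lemma not_has2K2_bipartiteOfRel_lt [LinearOrder α] :
    ¬ Has2K2 (bipartiteOfRel fun a b : α => a < b) :=
  not_has2K2_bipartiteOfRel fun a b a' b' hab hab' => by
    by_contra! h
    exact lt_irrefl a (((hab.trans_le h.2).trans hab').trans_le h.1)

end BipartiteOfRel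

section Crown

variable {n : ℕ} {i j : Fin n}

lemma crown_eq_bipartiteOfRel (n : ℕ) : crown n = bipartiteOfRel fun i j : Fin n => i ≠ j := rfl

lemma has2K2_crown (hij : i ≠ j) : Has2K2 (crown n) :=
  ⟨.inl i, .inr j, .inl j, .inr i, by simp [crown_eq_bipartiteOfRel, hij, hij.symm]⟩

lemma crown_sdiff_bipartiteOfRel_lt :
    crown n \ bipartiteOfRel (· < ·) = bipartiteOfRel fun i j : Fin n => j < i := by
  ext (x | x) (y | y) <;> simp [crown_eq_bipartiteOfRel] <;> omega

lemma isFerrersPartition_crown (n : ℕ) :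
    IsFerrersPartition (crown n) 2 (edgeSplit (bipartiteOfRel (· < ·)) (crown n)) := by
  refine isFerrersPartition_edgeSplit (bipartiteOfRel_mono fun _ _ => ne_of_lt)
    not_has2K2_bipartiteOfRel_lt ?_
  rw [crown_sdiff_bipartiteOfRel_lt]
  exact not_has2K2_bipartiteOfRel_lt (α := (Fin n)ᵒᵈ)

lemma fp_crown (hij : i ≠ j) : fp (crown n) = 2 :=
  fp_eq_two (has2K2_crown hij) (isFerrersPartition_crown n)

lemma exists_of_chost_crown_adj {e f : (crown n).edgeSet} (h : (Chost (crown n)).Adj e f) :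
    ∃ i j : Fin n, i ≠ j ∧ e.1 = s(.inl i, .inr j) ∧ f.1 = s(.inl j, .inr i) := by
  have transpose {e f : (crown n).edgeSet} : (∃ u v u' v', e.1 = s(.inl u, .inr v) ∧
      f.1 = s(.inl u', .inr v') ∧ u ≠ u' ∧ v ≠ v' ∧
      ¬ (crown n).Adj (.inl u) (.inr v') ∧ ¬ (crown n).Adj (.inl u') (.inr v)) →
      ∃ i j : Fin n, i ≠ j ∧ e.1 = s(.inl i, .inr j) ∧ f.1 = s(.inl j, .inr i) := by
    rintro ⟨u, v, u', v', he, hf, hu, -, huv', hu'v⟩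
    simp only [crown_eq_bipartiteOfRel, bipartiteOfRel_adj_inl_inr, not_not] at huv' hu'v
    subst huv' hu'v
    exact ⟨u, u', hu, he, hf⟩
  obtain ⟨-, h | h⟩ := (fromRel_adj _ _ _).mp h
  · exact transpose h
  · obtain ⟨i, j, hij, hf, he⟩ := transpose h
    exact ⟨j, i, hij.symm, he, hf⟩

lemma edgeSplit_ne_of_chost_crown_adj {e f : (crown n).edgeSet}
    (h : (Chost (crown n)).Adj e f) :
    edgeSplit (bipartiteOfRel (· < ·)) (crown n) e ≠
      edgeSplit (bipartiteOfRel (· < ·)) (crown n) f := by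
  obtain ⟨i, j, hij, he, hf⟩ := exists_of_chost_crown_adj h
  intro hef
  have : i < j ↔ j < i := by
    rw [← mk_mem_edgeSet_bipartiteOfRel (R := (· < ·)), ← he, ← edgeSplit_eq_zero_iff, hef,
      edgeSplit_eq_zero_iff, hf, mk_mem_edgeSet_bipartiteOfRel]
  omega

lemma chost_crown_ne_bot (hij : i ≠ j) : Chost (crown n) ≠ ⊥ := by
  have mem {i j : Fin n} (hij : i ≠ j) : s(.inl i, .inr j) ∈ (crown n).edgeSet :=
    mk_mem_edgeSet_bipartiteOfRel.mpr hij
  refine ne_bot_iff_exists_adj.mpr ⟨⟨_, mem hij⟩, ⟨_, mem hij.symm⟩, ?_⟩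
  refine (fromRel_adj _ _ _).mpr
    ⟨by simp [hij], .inl ⟨i, j, j, i, rfl, rfl, hij, hij.symm, ?_⟩⟩
  simp [crown_eq_bipartiteOfRel]

lemma chromaticNumber_chost_crown (hij : i ≠ j) : (Chost (crown n)).chromaticNumber = 2 :=
  chromaticNumber_eq_two_iff.mpr
    ⟨⟨Coloring.mk _ edgeSplit_ne_of_chost_crown_adj⟩, chost_crown_ne_bot hij⟩

end Crown

/-- For the crown graph `H₄ = K_{4,4}` minus a perfect matching, `fp (H₄) = 2` and
the chromatic number of its host-induced `2K₂` conflict graph equals `2`,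
so the conflict-graph lower bound is tight. -/
theorem stmt18 :
    fp (crown 4) = 2 ∧ (Chost (crown 4)).chromaticNumber = 2 :=
  have h01 : (0 : Fin 4) ≠ 1 := by decide
  ⟨fp_crown h01, chromaticNumber_chost_crown h01⟩
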